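/- Let Σ_1, Σ_2 be finite alphabets, let b ≥ 3, t_1 ≥ 1, and t = t_1·(b−2). Let s ∈ Σ_1^ℓ be a (b,1)-constrained de Bruijn sequence and let C ⊆ Σ_2^ℓ be a code in which any two distinct codewords have Hamming distance at least t+1. For c ∈ C define f(c) ∈ (Σ_2 × Σ_1)^ℓ by f(c)_i = (c_i, s_i). Suppose c, c' ∈ C and m, m' : {1,…,ℓ} → ℕ are multiplicity functions whose zero sets are each a union of at most t_1 sets of consecutive integers of size at most b−2 each (arbitrary values m(i) ≥ 1 elsewhere). If the received words f(c)(m) and f(c')(m') (obtained by writing m(i), resp. m'(i), copies of the i-th symbol) are equal, then c = c'. In other words, the code { f(c) : c ∈ C } corrects any number of sticky insertions together with any t_1 bursts of deletions, each burst of length at most b−2. -/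

import Mathlib

/-- The window `s[i, i+k-1]` (0-based start `i`, length `k`). -/
def window {A : Type*} (s : List A) (i k : ℕ) : List A := (s.drop i).take k

/-- `s` is a `(b,k)`-constrained de Bruijn sequence: any two windows of length `k`
starting at distinct positions at distance at most `b-1` are distinct. -/
def IsCDB {A : Type*} (s : List A) (b k : ℕ) : Prop :=
  ∀ i j : ℕ, i < j → j - i ≤ b - 1 → j + k ≤ s.length → window s i k ≠ window s j k

/-- The received word obtained by reading the symbol at (0-based) position `i` of `s`
exactly `m i` times, in order (`m i = 0` is a deletion, `m i ≥ 2` sticky insertions). -/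
def expand {A : Type*} (s : List A) (m : ℕ → ℕ) : List A :=
  (s.zipIdx.map fun p => List.replicate (m p.2) p.1).flatten

/-- Hamming distance between two words of the same length. -/
def hdist {B : Type*} [DecidableEq B] (x y : List B) : ℕ :=
  (List.zipWith (fun a b => if a = b then 0 else 1) x y).sum

/-- Within positions `{0,…,ℓ-1}`, the zero set of the multiplicity function `m` is
a union of at most `t₁` bursts (sets of consecutive integers), each of size at
most `w`, with no run of `w+1` consecutive zero positions (bursts are separated). -/
def ZeroBurst (m : ℕ → ℕ) (t₁ w ℓ : ℕ) : Prop :=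
  (∃ l : List (ℕ × ℕ), l.length ≤ t₁ ∧ (∀ p ∈ l, p.2 ≤ w) ∧
      ∀ i : ℕ, i < ℓ → (m i = 0 ↔ ∃ p ∈ l, p.1 ≤ i ∧ i < p.1 + p.2))
    ∧ ¬ ∃ j : ℕ, j + (w + 1) ≤ ℓ ∧ ∀ u : ℕ, u ≤ w → m (j + u) = 0

/-!
Pairing each codeword with `s` makes any two symbols of `f(c)` at distance at most `b - 1`
differ, and since no `b - 1` consecutive positions are deleted, consecutive surviving
positions are at distance at most `b - 1`. So the maximal runs of the received word are
exactly the surviving positions, in order. Reading the runs from the left, the `s`-component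
of each run pins down its position: the two candidate positions (for `m` and for `m'`) lie
within distance `b - 2` of each other, where `s` is injective. Hence `c` and `c'` agree at every
position surviving in `m`, and differ in at most `t₁ (b - 2)` places, less than the minimum
distance.
-/

open Finset

section Expand

variable {γ : Type*}

lemma expand_cons (a : γ) (l : List γ) (m : ℕ → ℕ) :
    expand (a :: l) m = List.replicate (m 0) a ++ expand l (fun i => m (i + 1)) := by
  simp only [expand, List.zipIdx_cons, List.map_cons, List.flatten_cons, Nat.zero_add,
    List.zipIdx_succ, List.map_map]
  rfl

lemma exists_of_mem_head?_expand {z : γ} :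
    ∀ {l : List γ} {m : ℕ → ℕ}, z ∈ (expand l m).head? →
      ∃ j, l[j]? = some z ∧ m j ≠ 0 ∧ ∀ i < j, m i = 0
  | [], _, hz => by simp [expand] at hz
  | a :: l, m, hz => by
    rw [expand_cons] at hz
    by_cases h0 : m 0 = 0
    · rw [h0, List.replicate_zero, List.nil_append] at hz
      obtain ⟨j, hj, hmj, hlt⟩ := exists_of_mem_head?_expand hz
      refine ⟨j + 1, hj, hmj, fun i hi => ?_⟩
      cases i with
      | zero => exact h0
      | succ i => exact hlt i (by omega)
    · obtain ⟨k, hk⟩ := Nat.exists_eq_succ_of_ne_zero h0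
      rw [hk, List.replicate_succ, List.cons_append, List.head?_cons, Option.mem_some_iff] at hz
      exact ⟨0, by simp [hz], h0, by simp⟩

lemma eq_of_replicate_append_eq {a : γ} {X Y : List γ} (hX : X.head? ≠ some a)
    (hY : Y.head? ≠ some a) :
    ∀ {n n' : ℕ}, List.replicate n a ++ X = List.replicate n' a ++ Y → X = Y
  | 0, 0, h => by simpa using h
  | 0, _ + 1, h => absurd (by rw [(List.nil_append X).symm.trans h]; rfl) hX
  | _ + 1, 0, h => absurd (by rw [← h.trans (List.nil_append Y)]; rfl) hY
  | n + 1, n' + 1, h => eq_of_replicate_append_eq hX hY (List.cons.inj h).2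

end Expand

section DeBruijn

variable {α : Type*}

lemma window_one (s : List α) (i : ℕ) : window s i 1 = s[i]?.toList := by
  rw [window, List.take_one, List.head?_drop]

lemma IsCDB.tail {a : α} {s : List α} {b k : ℕ} (h : IsCDB (a :: s) b k) : IsCDB s b k :=
  fun i j hij hji hjk => h (i + 1) (j + 1) (by omega) (by omega) (by simp; omega)

lemma IsCDB.getElem?_ne {s : List α} {b i j : ℕ} (h : IsCDB s b 1) (hij : i < j)
    (hji : j - i ≤ b - 1) (hj : j < s.length) : s[i]? ≠ s[j]? := fun heq =>
  h i j hij hji hj (by rw [window_one, window_one, heq])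

end DeBruijn

def HasZeroRun (m : ℕ → ℕ) (w n : ℕ) : Prop :=
  ∃ j, j + (w + 1) ≤ n ∧ ∀ u ≤ w, m (j + u) = 0

lemma HasZeroRun.of_tail {m : ℕ → ℕ} {w n : ℕ} (h : HasZeroRun (fun i => m (i + 1)) w n) :
    HasZeroRun m w (n + 1) :=
  let ⟨j, hj, hzero⟩ := h
  ⟨j + 1, by omega, fun u hu => by simpa [Nat.add_right_comm] using hzero u hu⟩

section Recovery

variable {γ α : Type*} (key : γ → α) {w : ℕ}

lemma key_ne_of_mem_head?_expand {a z : γ} {l : List γ} {m : ℕ → ℕ}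
    (hs : IsCDB ((a :: l).map key) (w + 2) 1) (hm : ¬HasZeroRun m w (l.length + 1))
    (hz : z ∈ (expand l fun i => m (i + 1)).head?) : key z ≠ key a := by
  obtain ⟨j, hj, hmj, hzero⟩ := exists_of_mem_head?_expand hz
  have hjl : j < l.length := (List.getElem?_eq_some_iff.mp hj).1
  have hjw : j ≤ w := by
    by_contra! hwj
    exact hm ⟨1, by omega, fun u hu => by simpa [Nat.add_comm] using hzero u (by omega)⟩
  intro hkey
  refine hs.getElem?_ne (i := 0) (j := j + 1) (by omega) (by omega) (by simpa using hjl) ?_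
  simp [hj, hkey]

lemma expand_cons_ne_of_eq_zero {a a' : γ} {l l' : List γ} {m m' : ℕ → ℕ}
    (hs : IsCDB ((a :: l).map key) (w + 2) 1) (hm : ¬HasZeroRun m w (l.length + 1))
    (hkey : key a = key a') (h0 : m 0 = 0) (h0' : m' 0 ≠ 0) :
    expand (a :: l) m ≠ expand (a' :: l') m' := by
  intro h
  obtain ⟨k, hk⟩ := Nat.exists_eq_succ_of_ne_zero h0'
  rw [expand_cons, expand_cons, h0, hk, List.replicate_zero, List.nil_append,
    List.replicate_succ, List.cons_append] at h
  exact key_ne_of_mem_head?_expand key hs hm (z := a') (by simp [h]) hkey.symm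

theorem getElem?_eq_of_expand_eq :
    ∀ {E E' : List γ} {m m' : ℕ → ℕ}, E.map key = E'.map key →
      IsCDB (E.map key) (w + 2) 1 → ¬HasZeroRun m w E.length → ¬HasZeroRun m' w E.length →
      expand E m = expand E' m' → ∀ i, m i ≠ 0 → E[i]? = E'[i]?
  | [], E', _, _, hkey, _, _, _, _, _, _ => by
    rw [List.eq_nil_of_map_eq_nil hkey.symm]
  | _ :: _, [], _, _, hkey, _, _, _, _, _, _ => nomatch hkey
  | a :: l, a' :: l', m, m', hkey, hs, hm, hm', h, i, hi => by
    obtain ⟨ha, hl⟩ := List.cons.inj hkey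
    have hlen : l.length = l'.length := by simpa using congrArg List.length hl
    have hs' : IsCDB ((a' :: l').map key) (w + 2) 1 := hkey ▸ hs
    have hm'' : ¬HasZeroRun m' w (l'.length + 1) := hlen ▸ hm'
    have htail := getElem?_eq_of_expand_eq hl hs.tail (fun h => hm h.of_tail)
      (fun h => hm' h.of_tail)
    by_cases h0 : m 0 = 0 <;> by_cases h0' : m' 0 = 0
    · rw [expand_cons, expand_cons, h0, h0'] at h
      cases i with
      | zero => exact absurd h0 hi
      | succ i => exact htail (by simpa using h) i hi
    · exact absurd h (expand_cons_ne_of_eq_zero key hs hm ha h0 h0')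
    · exact absurd h.symm (expand_cons_ne_of_eq_zero key hs' hm'' ha.symm h0' h0)
    · obtain ⟨k, hk⟩ := Nat.exists_eq_succ_of_ne_zero h0
      obtain ⟨k', hk'⟩ := Nat.exists_eq_succ_of_ne_zero h0'
      rw [expand_cons, expand_cons] at h
      have haa : a = a' := by
        rw [hk, hk', List.replicate_succ, List.replicate_succ] at h
        exact (List.cons.inj h).1
      subst haa
      have hrest := eq_of_replicate_append_eq
        (fun hX => key_ne_of_mem_head?_expand key hs hm hX rfl)
        (fun hY => key_ne_of_mem_head?_expand key hs' hm'' hY rfl) h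
      cases i with
      | zero => rfl
      | succ i => exact htail hrest i hi

end Recovery

lemma getElem?_eq_of_expand_zip_eq {A B : Type*} {u v : List B} {s : List A} {w : ℕ}
    {m m' : ℕ → ℕ} (hu : u.length = s.length) (hv : v.length = s.length)
    (hs : IsCDB s (w + 2) 1) (hm : ¬HasZeroRun m w s.length) (hm' : ¬HasZeroRun m' w s.length)
    (h : expand (u.zip s) m = expand (v.zip s) m') (i : ℕ) (hi : m i ≠ 0) :
    u[i]? = v[i]? := by
  have hsnd : ∀ d : List B, d.length = s.length → (d.zip s).map Prod.snd = s :=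
    fun d hd => List.map_snd_zip hd.ge
  have hfst : ∀ d : List B, d.length = s.length → (d.zip s).map Prod.fst = d :=
    fun d hd => List.map_fst_zip hd.le
  have hlen : (u.zip s).length = s.length := by simp [hu]
  have hzip := getElem?_eq_of_expand_eq Prod.snd (by rw [hsnd u hu, hsnd v hv])
    (by rwa [hsnd u hu]) (hlen ▸ hm) (hlen ▸ hm') h i hi
  rw [← hfst u hu, ← hfst v hv, List.getElem?_map, List.getElem?_map, hzip]

lemma hdist_le_card_filter_ne {B : Type*} [DecidableEq B] :
    ∀ x y : List B, hdist x y ≤ #{i ∈ range x.length | x[i]? ≠ y[i]?}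
  | [], _ => by simp [hdist]
  | _ :: _, [] => by simp [hdist]
  | a :: x, a' :: y => by
    have ih := hdist_le_card_filter_ne x y
    rw [card_filter] at ih ⊢
    rw [List.length_cons, sum_range_succ']
    simp only [hdist, List.zipWith_cons_cons, List.sum_cons, List.getElem?_cons_succ,
      List.getElem?_cons_zero, ne_eq, Option.some.injEq] at ih ⊢
    split_ifs <;> omega

lemma hdist_le_card_filter_eq_zero {B : Type*} [DecidableEq B] {x y : List B} {m : ℕ → ℕ}
    (h : ∀ i, m i ≠ 0 → x[i]? = y[i]?) : hdist x y ≤ #{i ∈ range x.length | m i = 0} :=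
  (hdist_le_card_filter_ne x y).trans <| card_le_card <| monotone_filter_right _
    fun i _ hne => by_contra fun h0 => hne (h i h0)

lemma ZeroBurst.card_filter_eq_zero_le {m : ℕ → ℕ} {t₁ w ℓ : ℕ} (h : ZeroBurst m t₁ w ℓ) :
    #{i ∈ range ℓ | m i = 0} ≤ t₁ * w := by
  obtain ⟨⟨l, hlen, hw, hzero⟩, -⟩ := h
  calc #{i ∈ range ℓ | m i = 0}
      ≤ #(l.toFinset.biUnion fun p => Ico p.1 (p.1 + p.2)) := by
        refine card_le_card fun i hi => ?_
        rw [mem_filter, mem_range] at hi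
        obtain ⟨p, hp, hpi⟩ := (hzero i hi.1).mp hi.2
        exact mem_biUnion.mpr ⟨p, List.mem_toFinset.mpr hp, mem_Ico.mpr hpi⟩
    _ ≤ ∑ p ∈ l.toFinset, #(Ico p.1 (p.1 + p.2)) := card_biUnion_le
    _ ≤ l.toFinset.card * w := by
        refine sum_le_card_nsmul _ _ _ fun p hp => ?_
        simpa using hw p (List.mem_toFinset.mp hp)
    _ ≤ t₁ * w := Nat.mul_le_mul_right w ((List.toFinset_card_le l).trans hlen)

theorem stmt17_general {A B : Type*} [DecidableEq B] (b t₁ ℓ : ℕ) (hb : 3 ≤ b)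
    (s : List A) (hslen : s.length = ℓ) (hs : IsCDB s b 1)
    (C : Set (List B)) (hClen : ∀ c ∈ C, c.length = ℓ)
    (hCdist : ∀ c ∈ C, ∀ c' ∈ C, c ≠ c' → t₁ * (b - 2) + 1 ≤ hdist c c')
    (c c' : List B) (hc : c ∈ C) (hc' : c' ∈ C)
    (m m' : ℕ → ℕ)
    (hm : ZeroBurst m t₁ (b - 2) ℓ) (hm' : ZeroBurst m' t₁ (b - 2) ℓ)
    (heq : expand (c.zip s) m = expand (c'.zip s) m') :
    c = c' := by
  have hcl := hClen c hc
  have hagree := getElem?_eq_of_expand_zip_eq (hcl.trans hslen.symm)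
    ((hClen c' hc').trans hslen.symm) (by rwa [Nat.sub_add_cancel (by omega : 2 ≤ b)])
    (hslen ▸ hm.2) (hslen ▸ hm'.2) heq
  have hdist_le : hdist c c' ≤ t₁ * (b - 2) := calc
    hdist c c' ≤ #{i ∈ range ℓ | m i = 0} := hcl ▸ hdist_le_card_filter_eq_zero hagree
    _ ≤ t₁ * (b - 2) := hm.card_filter_eq_zero_le
  by_contra hne
  exact absurd (hCdist c hc c' hc' hne) (by omega)

theorem stmt17 {A B : Type*} [DecidableEq B] (b t₁ ℓ : ℕ) (hb : 3 ≤ b) (ht₁ : 1 ≤ t₁)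
    (s : List A) (hslen : s.length = ℓ) (hs : IsCDB s b 1)
    (C : Set (List B)) (hClen : ∀ c ∈ C, c.length = ℓ)
    (hCdist : ∀ c ∈ C, ∀ c' ∈ C, c ≠ c' → t₁ * (b - 2) + 1 ≤ hdist c c')
    (c c' : List B) (hc : c ∈ C) (hc' : c' ∈ C)
    (m m' : ℕ → ℕ)
    (hm : ZeroBurst m t₁ (b - 2) ℓ) (hm' : ZeroBurst m' t₁ (b - 2) ℓ)
    (heq : expand (c.zip s) m = expand (c'.zip s) m') :
    c = c' :=
  stmt17_general b t₁ ℓ hb s hslen hs C hClen hCdist c c' hc hc' m m' hm hm' heq
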